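/- Let d ≥ 2 and n ≥ 1 be integers and let u, v ∈ [0,1]^n. The inner product of the qudit-encoded pure states satisfies ⟨Φ(u), Φ(v)⟩ = ∏_{i=1}^n cos^{d−1}( (u_i − v_i)π/2 ); in particular, the fidelity satisfies |⟨Φ(u), Φ(v)⟩|² = ∏_{i=1}^n cos^{2(d−1)}( |u_i − v_i| π/2 ). -/

import Mathlib

open MeasureTheory Metric Finset
open scoped ComplexOrder

noncomputable section

/-- Qudit encoding of a pixel value `u ∈ [0,1]`: the `j`-th component (0-indexed) is
`√(binom (d-1) j) · cos^{d-1-j}(πu/2) · sin^j(πu/2)`. -/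
def quditVec (d : ℕ) (u : ℝ) : Fin d → ℂ := fun j =>
  (Real.sqrt ((d - 1).choose j) *
    Real.cos (Real.pi * u / 2) ^ (d - 1 - (j : ℕ)) *
    Real.sin (Real.pi * u / 2) ^ (j : ℕ) : ℝ)

/-- Encoded product pure state `|Φ(u)⟩ = φ_d(u_1) ⊗ ⋯ ⊗ φ_d(u_n)`, with `(ℂ^d)^{⊗n}`
realized as functions `(Fin n → Fin d) → ℂ`. -/
def encState (d n : ℕ) (u : Fin n → ℝ) : (Fin n → Fin d) → ℂ := fun f =>
  ∏ i, quditVec d (u i) (f i)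

/-- Density matrix `ρ(u) = |Φ(u)⟩⟨Φ(u)|` of the encoded state. -/
def encRho (d n : ℕ) (u : Fin n → ℝ) :
    Matrix (Fin n → Fin d) (Fin n → Fin d) ℂ := fun a b =>
  encState d n u a * star (encState d n u b)

/-!
Write `α = πa/2`, `β = πb/2`. Componentwise,
`conj φ_d(a)_j · φ_d(b)_j = C(d-1, j) (sin α sin β)^j (cos α cos β)^(d-1-j)`, so by the binomial
theorem `⟨φ_d(a), φ_d(b)⟩ = (cos α cos β + sin α sin β)^(d-1) = cos^(d-1)(α - β)`. The inner product
of product states is the product of the inner products of the factors. All these numbers are real,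
so the fidelity is the square of the product, and `cos` is even.
-/

open Real

theorem sum_star_prod_mul_prod {R ι κ : Type*} [CommSemiring R] [StarRing R] [Fintype ι]
    [DecidableEq ι] [Fintype κ] (x y : ι → κ → R) :
    ∑ f : ι → κ, star (∏ i, x i (f i)) * ∏ i, y i (f i) = ∏ i, ∑ j, star (x i j) * y i j := by
  simp only [Fintype.prod_sum, star_prod, ← Finset.prod_mul_distrib]

theorem star_quditVec_mul_quditVec (m : ℕ) (a b : ℝ) (j : Fin (m + 1)) :
    star (quditVec (m + 1) a j) * quditVec (m + 1) b j =
      ((sin (π * a / 2) * sin (π * b / 2)) ^ (j : ℕ) *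
        (cos (π * a / 2) * cos (π * b / 2)) ^ (m - j) * m.choose j : ℝ) := by
  simp only [quditVec, Nat.add_sub_cancel, Complex.star_def, Complex.conj_ofReal,
    ← Complex.ofReal_mul]
  congr 1
  rw [mul_pow, mul_pow]
  linear_combination cos (π * a / 2) ^ (m - j) * cos (π * b / 2) ^ (m - j) *
    sin (π * a / 2) ^ (j : ℕ) * sin (π * b / 2) ^ (j : ℕ) *
    mul_self_sqrt (Nat.cast_nonneg (m.choose j))

theorem sum_star_quditVec_mul_quditVec {d : ℕ} (hd : 0 < d) (a b : ℝ) :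
    ∑ j, star (quditVec d a j) * quditVec d b j = (cos ((a - b) * π / 2) : ℂ) ^ (d - 1) := by
  obtain ⟨m, rfl⟩ : ∃ m, d = m + 1 := ⟨d - 1, by omega⟩
  have hcos : cos ((a - b) * π / 2) =
      sin (π * a / 2) * sin (π * b / 2) + cos (π * a / 2) * cos (π * b / 2) := by
    rw [show (a - b) * π / 2 = π * a / 2 - π * b / 2 by ring, cos_sub]
    ring
  simp only [star_quditVec_mul_quditVec, ← Complex.ofReal_sum, ← Complex.ofReal_pow,
    Nat.add_sub_cancel, hcos, add_pow]
  rw [Fin.sum_univ_eq_sum_range (fun j => (sin (π * a / 2) * sin (π * b / 2)) ^ j *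
    (cos (π * a / 2) * cos (π * b / 2)) ^ (m - j) * m.choose j)]

theorem stmt4_general (d n : ℕ) (hd : 2 ≤ d)
    (u v : Fin n → ℝ) :
    (∑ f : Fin n → Fin d, star (encState d n u f) * encState d n v f)
        = ∏ i, (Real.cos ((u i - v i) * Real.pi / 2) : ℂ) ^ (d - 1) ∧
      ‖∑ f : Fin n → Fin d, star (encState d n u f) * encState d n v f‖ ^ 2
        = ∏ i, Real.cos (|u i - v i| * Real.pi / 2) ^ (2 * (d - 1)) := by
  have hinner : ∑ f : Fin n → Fin d, star (encState d n u f) * encState d n v f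
      = ∏ i, (cos ((u i - v i) * π / 2) : ℂ) ^ (d - 1) := by
    simp only [encState, sum_star_prod_mul_prod,
      sum_star_quditVec_mul_quditVec (by omega : 0 < d)]
  refine ⟨hinner, ?_⟩
  rw [hinner, norm_prod, ← Finset.prod_pow]
  refine Finset.prod_congr rfl fun i _ => ?_
  have hcos_abs : cos (|u i - v i| * π / 2) = cos ((u i - v i) * π / 2) := by
    rw [← cos_abs ((u i - v i) * π / 2), abs_div, abs_mul, abs_of_pos pi_pos, abs_two]
  rw [hcos_abs, norm_pow, Complex.norm_real, norm_eq_abs, ← pow_mul, mul_comm (d - 1) 2,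
    (even_two_mul _).pow_abs]

/-- inner product and fidelity of qudit-encoded pure states. -/
theorem stmt4 (d n : ℕ) (hd : 2 ≤ d) (hn : 1 ≤ n)
    (u v : Fin n → ℝ) (hu : ∀ i, u i ∈ Set.Icc (0 : ℝ) 1)
    (hv : ∀ i, v i ∈ Set.Icc (0 : ℝ) 1) :
    (∑ f : Fin n → Fin d, star (encState d n u f) * encState d n v f)
        = ∏ i, (Real.cos ((u i - v i) * Real.pi / 2) : ℂ) ^ (d - 1) ∧
      ‖∑ f : Fin n → Fin d, star (encState d n u f) * encState d n v f‖ ^ 2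
        = ∏ i, Real.cos (|u i - v i| * Real.pi / 2) ^ (2 * (d - 1)) :=
  stmt4_general d n hd u v

end
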